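/- For every finite nonempty set I of positive integers, τ_I(TPrim) = Im(τ_I) ∩ TPrim. Moreover, TPrim is the internal direct sum, over all finite nonempty sets I of positive integers, of the subspaces Im(τ_I) ∩ TPrim. -/

import Mathlib

open scoped TensorProduct Classical

/-- The maximum letter of a word, with `wmax [] = 0`. -/
def wmax (w : List ℕ) : ℕ := w.foldr max 0

/-- A word over the positive integers is packed if every letter from `1` to its maximum
occurs in it. -/
def IsPacked (w : List ℕ) : Prop :=
  (∀ x ∈ w, 0 < x) ∧ ∀ i : ℕ, 0 < i → i ≤ wmax w → i ∈ w

/-- `pack w` replaces every occurrence of the `i`-th smallest distinct letter of `w` by `i`. -/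
def pack (w : List ℕ) : List ℕ :=
  w.map (fun a => (w.dedup.filter (fun b => b < a)).length + 1)

/-- The ambient free `ℚ`-vector space on all words. -/
abbrev V : Type := List ℕ →₀ ℚ

noncomputable instance : Zero (V ⊗[ℚ] V) :=
  (inferInstance : AddZeroClass (V ⊗[ℚ] V)).toZero

/-- The basis element `R_w`. -/
noncomputable def Rw (w : List ℕ) : V := Finsupp.single w 1

/-- `WQSym₊`: the span of the `R_w` over nonempty packed words `w`. -/
noncomputable def Wplus : Submodule ℚ V :=
  Submodule.span ℚ {x : V | ∃ w : List ℕ, IsPacked w ∧ w ≠ [] ∧ x = Rw w}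

/-- A valid cut for `Δ_≺` at position `i`: `1 ≤ i ≤ |w| - 1`, the letter sets of the two
factors are disjoint, and all occurrences of the maximum letter lie in the first `i`
positions. -/
def okL (w : List ℕ) (i : ℕ) : Prop :=
  1 ≤ i ∧ i < w.length ∧ (∀ a ∈ w.take i, a ∉ w.drop i) ∧ wmax w ∉ w.drop i

/-- A valid cut for `Δ_≻` at position `i`: `1 ≤ i ≤ |w| - 1`, the letter sets of the two
factors are disjoint, and all occurrences of the maximum letter lie in the last `n - i`
positions. -/
def okR (w : List ℕ) (i : ℕ) : Prop :=
  1 ≤ i ∧ i < w.length ∧ (∀ a ∈ w.take i, a ∉ w.drop i) ∧ wmax w ∉ w.take i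

noncomputable def cutsL (w : List ℕ) : V ⊗[ℚ] V :=
  ((((List.range w.length).filter (fun i => decide (okL w i))).map
    (fun i => Rw (pack (w.take i)) ⊗ₜ[ℚ] Rw (pack (w.drop i)))) : List (V ⊗[ℚ] V)).sum

noncomputable def cutsR (w : List ℕ) : V ⊗[ℚ] V :=
  ((((List.range w.length).filter (fun i => decide (okR w i))).map
    (fun i => Rw (pack (w.take i)) ⊗ₜ[ℚ] Rw (pack (w.drop i)))) : List (V ⊗[ℚ] V)).sum

/-- The left half-coproduct `Δ_≺` of `WQSym₊`. -/
noncomputable def deltaL : V →ₗ[ℚ] V ⊗[ℚ] V :=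
  Finsupp.lsum ℚ fun w => LinearMap.toSpanSingleton ℚ (V ⊗[ℚ] V) (cutsL w)

/-- The right half-coproduct `Δ_≻` of `WQSym₊`. -/
noncomputable def deltaR : V →ₗ[ℚ] V ⊗[ℚ] V :=
  Finsupp.lsum ℚ fun w => LinearMap.toSpanSingleton ℚ (V ⊗[ℚ] V) (cutsR w)

/-- The maximal letter of `w` occurs exactly at the (1-based) positions belonging to `I`. -/
def maxAt (w : List ℕ) (I : Finset ℕ) : Prop :=
  (∀ i ∈ I, 1 ≤ i ∧ i ≤ w.length) ∧
  ∀ j, j < w.length → (w.getD j 0 = wmax w ↔ j + 1 ∈ I)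

/-- The projector `τ_I`: on a basis element `R_w`, it is `R_w` when the maximal letter
of `w` occurs exactly at the positions of `I`, and `0` otherwise. -/
noncomputable def tauI (I : Finset ℕ) : V →ₗ[ℚ] V :=
  Finsupp.lsum ℚ fun w => LinearMap.toSpanSingleton ℚ V
    (if maxAt w I then Rw w else 0)

/-- The totally primitive elements of `WQSym₊`: `TPrim = Ker Δ_≺ ∩ Ker Δ_≻`. -/
noncomputable def TPrim : Submodule ℚ V :=
  Wplus ⊓ LinearMap.ker deltaL ⊓ LinearMap.ker deltaR

/-- The index type: finite nonempty sets of positive integers. -/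
def PosFinset : Type := {I : Finset ℕ // I.Nonempty ∧ ∀ i ∈ I, 0 < i}

/-!
`τ_I` is the coordinate projection onto the words whose maximal letter occupies exactly the
positions `I`. These projections are idempotent, have pairwise disjoint supports, and an element
is the sum of its images under the finitely many `τ_I` meeting its support. Everything therefore
reduces to `τ_I` preserving `TPrim`, which follows from the commutation relations
`Δ_≺ ∘ τ_I = (τ_I ⊗ id) ∘ Δ_≺` and `Δ_≻ ∘ τ_I = (∑_{n < min I} π_n ⊗ τ_{I - n}) ∘ Δ_≻`,
where `π_n` projects onto the words of length `n`: an admissible cut for `Δ_≺` leaves every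
maximal letter in the left factor, one for `Δ_≻` moves them all to the right factor, shifted by
the cut position, and packing preserves the positions of the maximal letter.
-/
lemma le_wmax {a : ℕ} {w : List ℕ} (h : a ∈ w) : a ≤ wmax w :=
  List.le_max_of_le h le_rfl

lemma wmax_le {m : ℕ} {w : List ℕ} (h : ∀ a ∈ w, a ≤ m) : wmax w ≤ m :=
  List.max_le_of_forall_le w m h

lemma wmax_mem {w : List ℕ} (h : w ≠ []) : wmax w ∈ w :=
  List.maximum_mem (List.foldr_max_of_ne_nil h).symm

lemma wmax_eq_of_subset {u w : List ℕ} (hsub : u ⊆ w) (hmem : wmax w ∈ u) : wmax u = wmax w :=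
  le_antisymm (wmax_le fun _ ha => le_wmax (hsub ha)) (le_wmax hmem)

lemma wmax_map_of_monotoneOn {f : ℕ → ℕ} {w : List ℕ} (h : w ≠ [])
    (hf : MonotoneOn f {a | a ∈ w}) : wmax (w.map f) = f (wmax w) := by
  refine le_antisymm (wmax_le ?_) (le_wmax (List.mem_map_of_mem (wmax_mem h)))
  simp only [List.mem_map, forall_exists_index, and_imp, forall_apply_eq_imp_iff₂]
  exact fun a ha => hf ha (wmax_mem h) (le_wmax ha)

/-- Positions are 1-based, as in `maxAt`. -/
def positions (a : ℕ) (w : List ℕ) : Finset ℕ :=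
  ((Finset.range w.length).filter (fun j => w.getD j 0 = a)).image (· + 1)

lemma mem_positions {a i : ℕ} {w : List ℕ} :
    i ∈ positions a w ↔ ∃ j < w.length, w.getD j 0 = a ∧ j + 1 = i := by
  simp [positions, and_assoc]

lemma pos_of_mem_positions {a i : ℕ} {w : List ℕ} (h : i ∈ positions a w) : 0 < i := by
  obtain ⟨j, -, -, rfl⟩ := mem_positions.mp h
  exact j.succ_pos

lemma positions_eq_empty {a : ℕ} {w : List ℕ} (h : a ∉ w) : positions a w = ∅ := by
  refine Finset.eq_empty_of_forall_notMem fun i hi => h ?_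
  obtain ⟨j, hj, rfl, -⟩ := mem_positions.mp hi
  rw [List.getD_eq_getElem _ _ hj]
  exact List.getElem_mem hj

lemma positions_nonempty {a : ℕ} {w : List ℕ} (h : a ∈ w) : (positions a w).Nonempty := by
  obtain ⟨j, hj, rfl⟩ := List.getElem_of_mem h
  exact ⟨j + 1, mem_positions.mpr ⟨j, hj, List.getD_eq_getElem _ _ hj, rfl⟩⟩

lemma positions_append (a : ℕ) (u v : List ℕ) :
    positions a (u ++ v) = positions a u ∪ (positions a v).image (· + u.length) := by
  ext i
  simp only [Finset.mem_union, Finset.mem_image, mem_positions, List.length_append]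
  constructor
  · rintro ⟨j, hj, ha, rfl⟩
    by_cases hju : j < u.length
    · exact .inl ⟨j, hju, by rwa [List.getD_append _ _ _ _ hju] at ha, rfl⟩
    · rw [List.getD_append_right _ _ _ _ (by omega)] at ha
      exact .inr ⟨j - u.length + 1, ⟨j - u.length, by omega, ha, rfl⟩, by omega⟩
  · rintro (⟨j, hj, ha, rfl⟩ | ⟨_, ⟨j, hj, ha, rfl⟩, rfl⟩)
    · exact ⟨j, by omega, by rwa [List.getD_append _ _ _ _ hj], rfl⟩
    · refine ⟨j + u.length, by omega, ?_, by omega⟩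
      rwa [List.getD_append_right _ _ _ _ (by omega), Nat.add_sub_cancel]

lemma positions_map {f : ℕ → ℕ} {a : ℕ} {w : List ℕ} (hf : ∀ b ∈ w, f b = f a ↔ b = a) :
    positions (f a) (w.map f) = positions a w := by
  ext i
  simp only [mem_positions, List.length_map]
  refine exists_congr fun j => and_congr_right fun hj => and_congr_left fun _ => ?_
  rw [List.getD_eq_getElem _ _ (by simpa using hj), List.getD_eq_getElem _ _ hj,
    List.getElem_map]
  exact hf _ (List.getElem_mem hj)

def maxSet (w : List ℕ) : Finset ℕ := positions (wmax w) w

lemma maxAt_iff {w : List ℕ} {I : Finset ℕ} : maxAt w I ↔ I = maxSet w := by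
  constructor
  · rintro ⟨hI, hw⟩
    ext i
    rw [maxSet, mem_positions]
    constructor
    · intro hi
      obtain ⟨hi1, hi2⟩ := hI i hi
      exact ⟨i - 1, by omega, (hw (i - 1) (by omega)).mpr (by rwa [Nat.sub_add_cancel hi1]),
        by omega⟩
    · rintro ⟨j, hj, hm, rfl⟩
      exact (hw j hj).mp hm
  · rintro rfl
    refine ⟨fun i hi => ?_, fun j hj => ?_⟩
    · obtain ⟨j, hj, -, rfl⟩ := mem_positions.mp hi
      omega
    · rw [maxSet, mem_positions]
      refine ⟨fun hm => ⟨j, hj, hm, rfl⟩, ?_⟩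
      rintro ⟨j', -, hm, hjj'⟩
      rwa [← Nat.succ_injective hjj']

lemma maxSet_nonempty {w : List ℕ} (h : w ≠ []) : (maxSet w).Nonempty :=
  positions_nonempty (wmax_mem h)

lemma maxSet_map_of_strictMonoOn {f : ℕ → ℕ} {w : List ℕ} (hf : StrictMonoOn f {a | a ∈ w}) :
    maxSet (w.map f) = maxSet w := by
  rcases eq_or_ne w [] with rfl | h
  · rfl
  rw [maxSet, wmax_map_of_monotoneOn h hf.monotoneOn]
  exact positions_map fun b hb => (hf.injOn.eq_iff hb (wmax_mem h))

lemma maxSet_append_of_notMem_right {u v : List ℕ} (hne : u ++ v ≠ [])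
    (hv : wmax (u ++ v) ∉ v) : maxSet (u ++ v) = maxSet u := by
  have hu : wmax (u ++ v) ∈ u := (List.mem_append.mp (wmax_mem hne)).resolve_right hv
  rw [maxSet, maxSet, positions_append, positions_eq_empty hv, Finset.image_empty,
    Finset.union_empty, wmax_eq_of_subset (List.subset_append_left u v) hu]

lemma maxSet_append_of_notMem_left {u v : List ℕ} (hne : u ++ v ≠ [])
    (hu : wmax (u ++ v) ∉ u) : maxSet (u ++ v) = (maxSet v).image (· + u.length) := by
  have hv : wmax (u ++ v) ∈ v := (List.mem_append.mp (wmax_mem hne)).resolve_left hu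
  rw [maxSet, maxSet, positions_append, positions_eq_empty hu, Finset.empty_union,
    wmax_eq_of_subset (List.subset_append_right u v) hv]

lemma pack_eq_map (w : List ℕ) :
    pack w = w.map fun a => (w.toFinset.filter (· < a)).card + 1 := rfl

lemma length_pack (w : List ℕ) : (pack w).length = w.length := List.length_map _

lemma maxSet_pack (w : List ℕ) : maxSet (pack w) = maxSet w := by
  rw [pack_eq_map]
  refine maxSet_map_of_strictMonoOn fun a ha b _ hab => Nat.succ_lt_succ (Finset.card_lt_card ?_)
  refine (Finset.ssubset_iff_of_subset fun c hc => ?_).mpr ⟨a, by simpa using ⟨ha, hab⟩, by simp⟩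
  simp only [Finset.mem_filter] at hc ⊢
  exact ⟨hc.1, hc.2.trans hab⟩

lemma maxSet_pack_take_of_okL {w : List ℕ} {i : ℕ} (h : okL w i) :
    maxSet (pack (w.take i)) = maxSet w := by
  have hne : w.take i ++ w.drop i ≠ [] := by
    simpa using List.ne_nil_of_length_pos (Nat.zero_lt_of_lt h.2.1)
  rw [maxSet_pack, ← maxSet_append_of_notMem_right hne (by simpa using h.2.2.2),
    List.take_append_drop]

lemma maxSet_eq_image_of_okR {w : List ℕ} {i : ℕ} (h : okR w i) :
    maxSet w = (maxSet (pack (w.drop i))).image (· + i) := by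
  have hne : w.take i ++ w.drop i ≠ [] := by
    simpa using List.ne_nil_of_length_pos (Nat.zero_lt_of_lt h.2.1)
  rw [maxSet_pack, ← List.take_append_drop i w, maxSet_append_of_notMem_left hne
    (by simpa using h.2.2.2), List.length_take_of_le h.2.1.le, List.take_append_drop]

lemma tauI_single (I : Finset ℕ) (w : List ℕ) (c : ℚ) :
    tauI I (Finsupp.single w c) = if maxAt w I then Finsupp.single w c else 0 := by
  simp [tauI, Rw]

lemma tauI_Rw (I : Finset ℕ) (w : List ℕ) : tauI I (Rw w) = if maxAt w I then Rw w else 0 :=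
  tauI_single I w 1

lemma tauI_apply (I : Finset ℕ) (x : V) : tauI I x = x.filter (maxAt · I) := by
  induction x using Finsupp.induction_linear with
  | zero => rw [map_zero, Finsupp.filter_zero]
  | add x y hx hy => rw [map_add, hx, hy, Finsupp.filter_add]
  | single w c =>
    rw [tauI_single]
    split_ifs with h
    · exact (Finsupp.filter_single_of_pos (maxAt · I) h).symm
    · exact (Finsupp.filter_single_of_neg (maxAt · I) h).symm

lemma comp_tauI_eq {M : Type*} [AddCommGroup M] [Module ℚ M] {I : Finset ℕ} (f : V →ₗ[ℚ] M)
    (g : M →ₗ[ℚ] M) (h : ∀ w, g (f (Rw w)) = if maxAt w I then f (Rw w) else 0) :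
    f ∘ₗ tauI I = g ∘ₗ f := by
  refine Finsupp.lhom_ext fun w c => ?_
  have hsingle : Finsupp.single w c = c • Rw w := by simp [Rw]
  simp only [LinearMap.comp_apply, hsingle, map_smul, tauI_Rw, h]
  split_ifs <;> simp

lemma map_list_sum_eq_ite {M F : Type*} [AddCommMonoid M] [FunLike F M M]
    [AddMonoidHomClass F M M] (g : F) (p : Prop) [Decidable p] (l : List M)
    (h : ∀ x ∈ l, g x = if p then x else 0) : g l.sum = if p then l.sum else 0 := by
  rw [map_list_sum, List.map_congr_left h]
  split_ifs <;> simp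

lemma deltaL_Rw (w : List ℕ) : deltaL (Rw w) = cutsL w := by simp [deltaL, Rw]

lemma deltaR_Rw (w : List ℕ) : deltaR (Rw w) = cutsR w := by simp [deltaR, Rw]

lemma deltaL_comp_tauI (I : Finset ℕ) :
    deltaL ∘ₗ tauI I = TensorProduct.map (tauI I) LinearMap.id ∘ₗ deltaL := by
  refine comp_tauI_eq _ _ fun w => ?_
  rw [deltaL_Rw]
  refine map_list_sum_eq_ite _ _ _ fun x hx => ?_
  obtain ⟨i, hi, rfl⟩ := List.mem_map.mp hx
  have hok : okL w i := by simpa using (List.mem_filter.mp hi).2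
  rw [TensorProduct.map_tmul, LinearMap.id_apply, tauI_Rw, maxAt_iff, maxAt_iff,
    maxSet_pack_take_of_okL hok]
  split_ifs <;> simp

noncomputable def lengthProj (n : ℕ) : V →ₗ[ℚ] V :=
  Finsupp.lsum ℚ fun w => LinearMap.toSpanSingleton ℚ V (if w.length = n then Rw w else 0)

lemma lengthProj_Rw (n : ℕ) (w : List ℕ) :
    lengthProj n (Rw w) = if w.length = n then Rw w else 0 := by
  simp [lengthProj, Rw]

lemma sum_map_lengthProj_tauI_tmul (m : ℕ) (J : ℕ → Finset ℕ) (u v : List ℕ) :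
    (∑ n ∈ Finset.range m, TensorProduct.map (lengthProj n) (tauI (J n))) (Rw u ⊗ₜ Rw v) =
      if u.length < m ∧ maxAt v (J u.length) then Rw u ⊗ₜ Rw v else 0 := by
  simp only [LinearMap.sum_apply, TensorProduct.map_tmul, lengthProj_Rw, tauI_Rw,
    TensorProduct.ite_tmul]
  rw [Finset.sum_ite_eq, TensorProduct.tmul_ite, ← ite_and]
  exact if_congr (and_congr_left' Finset.mem_range) rfl rfl

lemma Finset.eq_image_add_iff {I S : Finset ℕ} {n : ℕ} (hS : ∀ a ∈ S, 0 < a) :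
    I = S.image (· + n) ↔ (∀ a ∈ I, n < a) ∧ I.image (· - n) = S := by
  constructor
  · rintro rfl
    refine ⟨by simpa using fun a ha => hS a ha, ?_⟩
    rw [Finset.image_image]
    exact (Finset.image_congr fun a _ => by simp).trans S.image_id'
  · rintro ⟨hI, rfl⟩
    rw [Finset.image_image]
    refine (Finset.image_congr fun a ha => ?_).trans I.image_id' |>.symm
    simp [Nat.sub_add_cancel (hI a ha).le]

lemma deltaR_comp_tauI {I : Finset ℕ} (hI : I.Nonempty) :
    deltaR ∘ₗ tauI I =
      (∑ n ∈ Finset.range (I.min' hI), TensorProduct.map (lengthProj n) (tauI (I.image (· - n))))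
        ∘ₗ deltaR := by
  refine comp_tauI_eq _ _ fun w => ?_
  rw [deltaR_Rw]
  refine map_list_sum_eq_ite _ _ _ fun x hx => ?_
  obtain ⟨i, hi, rfl⟩ := List.mem_map.mp hx
  have hok : okR w i := by simpa using (List.mem_filter.mp hi).2
  have hcond : (i < I.min' hI ∧ maxAt (pack (w.drop i)) (I.image (· - i))) ↔ maxAt w I := by
    rw [Finset.lt_min'_iff, maxAt_iff, maxAt_iff, maxSet_eq_image_of_okR hok,
      Finset.eq_image_add_iff (S := maxSet _) fun _ => pos_of_mem_positions]
  rw [sum_map_lengthProj_tauI_tmul, length_pack, List.length_take_of_le hok.2.1.le]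
  exact if_congr hcond rfl rfl

lemma Finsupp.iSupIndep_supported {ι α R M : Type*} [Semiring R] [AddCommMonoid M] [Module R M]
    {s : ι → Set α} (hs : Pairwise fun i j => Disjoint (s i) (s j)) :
    iSupIndep fun i => Finsupp.supported M R (s i) := by
  intro i
  refine Disjoint.mono_right ?_ (Finsupp.disjoint_supported_supported (t := ⋃ j ≠ i, s j) ?_)
  · exact iSup₂_le fun j hj => Finsupp.supported_mono (Set.subset_biUnion_of_mem hj)
  · exact Set.disjoint_iUnion₂_right.mpr fun j hj => hs hj.symm

lemma Wplus_eq_supported : Wplus = Finsupp.supported ℚ ℚ {w | IsPacked w ∧ w ≠ []} := by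
  rw [Finsupp.supported_eq_span_single, Wplus]
  congr 1
  ext x
  simp [Rw, eq_comm, and_assoc]

lemma tauI_mem_supported (I : Finset ℕ) {s : Set (List ℕ)} {x : V}
    (hx : x ∈ Finsupp.supported ℚ ℚ s) : tauI I x ∈ Finsupp.supported ℚ ℚ s := by
  rw [tauI_apply, Finsupp.mem_supported, Finsupp.support_filter]
  exact fun w hw => hx (Finset.filter_subset _ _ hw)

lemma tauI_mem_supported_maxAt (I : Finset ℕ) (x : V) :
    tauI I x ∈ Finsupp.supported ℚ ℚ {w | maxAt w I} := by
  rw [tauI_apply, Finsupp.mem_supported, Finsupp.support_filter]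
  exact fun w hw => (Finset.mem_filter.mp hw).2

lemma tauI_tauI (I : Finset ℕ) (x : V) : tauI I (tauI I x) = tauI I x := by
  ext w
  simp only [tauI_apply, Finsupp.filter_apply]
  split_ifs <;> rfl

lemma sum_tauI_eq_self (x : V) {T : Finset (Finset ℕ)} (hT : ∀ w ∈ x.support, maxSet w ∈ T) :
    ∑ I ∈ T, tauI I x = x := by
  ext w
  simp only [Finsupp.finsetSum_apply, tauI_apply, Finsupp.filter_apply, maxAt_iff,
    Finset.sum_ite_eq']
  by_cases hw : w ∈ x.support
  · rw [if_pos (hT w hw)]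
  · rw [Finsupp.notMem_support_iff.mp hw, ite_self]

lemma TPrim_le_Wplus : TPrim ≤ Wplus := inf_le_left.trans inf_le_left

lemma tauI_mem_TPrim {I : Finset ℕ} (hI : I.Nonempty) {x : V} (hx : x ∈ TPrim) :
    tauI I x ∈ TPrim := by
  simp only [TPrim, Submodule.mem_inf, LinearMap.mem_ker] at hx ⊢
  obtain ⟨⟨hW, hL⟩, hR⟩ := hx
  refine ⟨⟨?_, ?_⟩, ?_⟩
  · rw [Wplus_eq_supported] at hW ⊢
    exact tauI_mem_supported I hW
  · rw [← LinearMap.comp_apply, deltaL_comp_tauI, LinearMap.comp_apply, hL, map_zero]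
  · rw [← LinearMap.comp_apply, deltaR_comp_tauI hI, LinearMap.comp_apply, hR, map_zero]

lemma map_tauI_TPrim {I : Finset ℕ} (hI : I.Nonempty) :
    Submodule.map (tauI I) TPrim = Submodule.map (tauI I) Wplus ⊓ TPrim := by
  refine le_antisymm (le_inf (Submodule.map_mono TPrim_le_Wplus) ?_) ?_
  · rintro _ ⟨x, hx, rfl⟩
    exact tauI_mem_TPrim hI hx
  · rintro _ ⟨⟨x, -, rfl⟩, hx⟩
    exact ⟨tauI I x, hx, tauI_tauI I x⟩

lemma iSupIndep_map_tauI_inf_TPrim :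
    iSupIndep fun I : PosFinset => Submodule.map (tauI I.1) Wplus ⊓ TPrim := by
  have hdisj : Pairwise fun I J : PosFinset => Disjoint {w | maxAt w I.1} {w | maxAt w J.1} :=
    fun I J hIJ => Set.disjoint_left.mpr fun w hI hJ =>
      hIJ (Subtype.ext ((maxAt_iff.mp hI).trans (maxAt_iff.mp hJ).symm))
  refine (Finsupp.iSupIndep_supported hdisj).mono fun I => inf_le_left.trans ?_
  rintro _ ⟨x, -, rfl⟩
  exact tauI_mem_supported_maxAt I.1 x

lemma TPrim_le_iSup_map_tauI_inf_TPrim :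
    TPrim ≤ ⨆ I : PosFinset, Submodule.map (tauI I.1) Wplus ⊓ TPrim := by
  intro x hx
  rw [← sum_tauI_eq_self x fun w hw => Finset.mem_image_of_mem maxSet hw]
  refine Submodule.sum_mem _ fun I hI => ?_
  obtain ⟨w, hw, rfl⟩ := Finset.mem_image.mp hI
  have hw_ne : w ≠ [] := by
    have := TPrim_le_Wplus hx
    rw [Wplus_eq_supported] at this
    exact (this hw).2
  have hne := maxSet_nonempty hw_ne
  refine Submodule.mem_iSup_of_mem ⟨maxSet w, hne, fun _ => pos_of_mem_positions⟩ ?_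
  exact ⟨⟨x, TPrim_le_Wplus hx, rfl⟩, tauI_mem_TPrim hne hx⟩

theorem TPrim_direct_sum_decomposition :
    (∀ I : Finset ℕ, I.Nonempty → (∀ i ∈ I, 0 < i) →
      Submodule.map (tauI I) TPrim = Submodule.map (tauI I) Wplus ⊓ TPrim) ∧
    iSupIndep (fun I : PosFinset => Submodule.map (tauI I.1) Wplus ⊓ TPrim) ∧
    (⨆ I : PosFinset, Submodule.map (tauI I.1) Wplus ⊓ TPrim) = TPrim :=
  ⟨fun _ hI _ => map_tauI_TPrim hI, iSupIndep_map_tauI_inf_TPrim,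
    le_antisymm (iSup_le fun _ => inf_le_right) TPrim_le_iSup_map_tauI_inf_TPrim⟩
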